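/- For any nonempty strings u and v over Σ: u ≺ uv and u ≺ vu in V-order (every nonempty proper prefix and every nonempty proper suffix of a string precedes that string in V-order). -/

import Mathlib

variable {α : Type*} [LinearOrder α]

/-- The star operation on strings: delete the letter `x_h`, where `h` is the
start of the longest non-decreasing suffix (so `h = 1` iff the whole string is
non-decreasing, and otherwise `x_{h-1} > x_h ≤ x_{h+1} ≤ ⋯ ≤ x_n`). -/
def vstar : List α → List α
  | [] => []
  | a :: t => if List.IsChain (· ≤ ·) (a :: t) then t else a :: vstar t

/-- V-order `≺` between distinct strings `x`, `y`: either `x` lies on the path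
`y, y*, y^{2*}, …, ε`, or (if neither lies on the path of the other) taking the
least `s, t` with `x^{(s+1)*} = y^{(t+1)*}` and the greatest position `j` at
which `s = x^{s*}` and `t = y^{t*}` differ, the letter of `x^{s*}` at `j` is
smaller than that of `y^{t*}`. -/
def VLess (x y : List α) : Prop :=
  (∃ k : ℕ, 0 < k ∧ vstar^[k] y = x) ∨
  ((¬ ∃ k : ℕ, vstar^[k] y = x) ∧ (¬ ∃ k : ℕ, vstar^[k] x = y) ∧
    ∃ s t : ℕ,
      vstar^[s + 1] x = vstar^[t + 1] y ∧
      (∀ s' t' : ℕ, vstar^[s' + 1] x = vstar^[t' + 1] y → s ≤ s' ∧ t ≤ t') ∧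
      ∃ j : ℕ, j < (vstar^[s] x).length ∧
        (∀ j' : ℕ, j < j' → (vstar^[s] x)[j']? = (vstar^[t] y)[j']?) ∧
        ∃ a b : α, (vstar^[s] x)[j]? = some a ∧ (vstar^[t] y)[j]? = some b ∧
          a < b)

/-!
The star deletes the first letter of the maximal non-decreasing suffix, so on `x ++ y` it acts
either inside `x` or inside `y`, and the deletion position never increases along a star path. By
induction on `|u| + |v|`, following the first deletion, either `u` lies on the star path of `uv`
(resp. `vu`), or the comparison is inherited from a smaller instance, or `u*` lies on that path
directly below some `b ≠ u` with `|b| = |u|`. Then `u` and `b` are two insertions of one letter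
into their common star, so they last differ at the deletion position of `u`. There either `u` has
a descent, and `b` carries the larger left neighbour, or the deletion happened in a sorted block:
the sorted suffix of `uv`, resp. the last letter of `v`, which only grows along the path of `v`
and exceeds the first letter of `u`, makes `b`'s letter the larger one.
-/

-- `h - 1` in the 0-based indexing of `List`.
def vstarIdx : List α → ℕ
  | [] => 0
  | a :: t => if List.IsChain (· ≤ ·) (a :: t) then 0 else vstarIdx t + 1

lemma vstar_eq_eraseIdx (z : List α) : vstar z = z.eraseIdx (vstarIdx z) := by
  induction z with
  | nil => rfl
  | cons a t ih => by_cases h : (a :: t).IsChain (· ≤ ·) <;> simp [vstar, vstarIdx, h, ih]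

lemma isChain_drop_vstarIdx (z : List α) : (z.drop (vstarIdx z)).IsChain (· ≤ ·) := by
  induction z with
  | nil => simp
  | cons a t ih => by_cases h : (a :: t).IsChain (· ≤ ·) <;> simp [vstarIdx, h, ih]

lemma vstarIdx_le_of_isChain_drop {z : List α} {n : ℕ} (h : (z.drop n).IsChain (· ≤ ·)) :
    vstarIdx z ≤ n := by
  induction z generalizing n with
  | nil => simp [vstarIdx]
  | cons a t ih =>
    rcases n with _ | n
    · simp_all [vstarIdx]
    · by_cases hc : (a :: t).IsChain (· ≤ ·)
      · simp [vstarIdx, hc]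
      · simpa [vstarIdx, hc] using ih h

lemma vstarIdx_le_iff {z : List α} {n : ℕ} :
    vstarIdx z ≤ n ↔ (z.drop n).IsChain (· ≤ ·) :=
  ⟨fun h => by
    simpa [Nat.add_sub_cancel' h] using (isChain_drop_vstarIdx z).drop (n - vstarIdx z),
    vstarIdx_le_of_isChain_drop⟩

lemma vstarIdx_lt_length {z : List α} (hz : z ≠ []) : vstarIdx z < z.length := by
  have : vstarIdx z ≤ z.length - 1 := vstarIdx_le_iff.2 (by simp [List.drop_length_sub_one hz])
  have := List.length_pos_iff.2 hz
  omega

lemma vstarIdx_le_length (z : List α) : vstarIdx z ≤ z.length :=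
  vstarIdx_le_iff.2 (by simp)

lemma getElem_vstarIdx_lt {z : List α} {n : ℕ} (hn : vstarIdx z = n + 1) (h : n + 1 < z.length) :
    z[n + 1] < z[n] := by
  have hnc : ¬ (z.drop n).IsChain (· ≤ ·) := by rw [← vstarIdx_le_iff]; omega
  have hc := isChain_drop_vstarIdx z
  rw [hn, List.drop_eq_getElem_cons h] at hc
  rw [List.drop_eq_getElem_cons (by omega), List.drop_eq_getElem_cons h,
    List.isChain_cons_cons] at hnc
  exact lt_of_not_ge fun hle => hnc ⟨hle, hc⟩

lemma length_vstar (z : List α) : (vstar z).length = z.length - 1 := by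
  rcases eq_or_ne z [] with rfl | hz
  · rfl
  · rw [vstar_eq_eraseIdx, List.length_eraseIdx_of_lt (vstarIdx_lt_length hz)]

lemma length_vstar_iterate (z : List α) (k : ℕ) : (vstar^[k] z).length = z.length - k := by
  induction k with
  | zero => rfl
  | succ k ih => rw [Function.iterate_succ_apply', length_vstar, ih]; omega

lemma vstar_iterate_eq_nil {z : List α} {k : ℕ} (h : z.length ≤ k) : vstar^[k] z = [] :=
  List.length_eq_zero_iff.1 (by rw [length_vstar_iterate]; omega)

lemma vstarIdx_vstar_le (z : List α) : vstarIdx (vstar z) ≤ vstarIdx z := by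
  rw [vstarIdx_le_iff, vstar_eq_eraseIdx, List.eraseIdx_eq_take_drop_succ, List.drop_append]
  simpa [vstarIdx_le_length] using (isChain_drop_vstarIdx z).drop 1

lemma antitone_vstarIdx_iterate (z : List α) : Antitone fun k => vstarIdx (vstar^[k] z) :=
  antitone_nat_of_succ_le fun k => by
    simpa only [Function.iterate_succ_apply'] using vstarIdx_vstar_le _

lemma vstarIdx_append_of_lt {x y : List α} (h : vstarIdx (x ++ y) < x.length) :
    vstarIdx (x ++ y) = vstarIdx x := by
  have hc : (x.drop (vstarIdx (x ++ y)) ++ y).IsChain (· ≤ ·) := by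
    rw [← List.drop_append_of_le_length h.le]; exact isChain_drop_vstarIdx (x ++ y)
  obtain ⟨hxc, hyc, hlast⟩ := List.isChain_append.1 hc
  have hle : vstarIdx x ≤ vstarIdx (x ++ y) := vstarIdx_le_of_isChain_drop hxc
  refine le_antisymm (vstarIdx_le_of_isChain_drop ?_) hle
  rw [List.drop_append_of_le_length (hle.trans h.le)]
  refine (isChain_drop_vstarIdx x).append hyc ?_
  simpa [List.getLast?_drop, show ¬ x.length ≤ vstarIdx x by omega,
    show ¬ x.length ≤ vstarIdx (x ++ y) by omega] using hlast

lemma vstar_append_of_lt {x y : List α} (h : vstarIdx (x ++ y) < x.length) :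
    vstar (x ++ y) = vstar x ++ y := by
  rw [vstar_eq_eraseIdx, vstar_eq_eraseIdx, vstarIdx_append_of_lt h,
    List.eraseIdx_append_of_lt_length (vstarIdx_append_of_lt h ▸ h)]

lemma vstar_append_of_length_le {x y : List α} (h : x.length ≤ vstarIdx (x ++ y)) :
    vstar (x ++ y) = x ++ vstar y := by
  have key : ∀ n, vstarIdx (x ++ y) ≤ x.length + n ↔ vstarIdx y ≤ n := fun n => by
    rw [vstarIdx_le_iff, vstarIdx_le_iff, List.drop_length_add_append]
  obtain ⟨n, hn⟩ := Nat.exists_eq_add_of_le h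
  have hidx : vstarIdx (x ++ y) = x.length + vstarIdx y :=
    le_antisymm ((key _).2 le_rfl) (by rw [hn]; exact Nat.add_le_add_left ((key n).1 hn.le) _)
  rw [vstar_eq_eraseIdx, vstar_eq_eraseIdx, hidx,
    List.eraseIdx_append_of_length_le (Nat.le_add_right _ _), Nat.add_sub_cancel_left]

lemma getElem?_vstar_iterate_of_vstarIdx_eq {z : List α} {k : ℕ}
    (hk : vstarIdx (vstar^[k] z) = vstarIdx z) {j : ℕ} (hj : vstarIdx z ≤ j) :
    (vstar^[k] z)[j]? = z[j + k]? := by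
  induction k generalizing j with
  | zero => rfl
  | succ k ih =>
    have hk' : vstarIdx (vstar^[k] z) = vstarIdx z := le_antisymm
      (antitone_vstarIdx_iterate z k.zero_le) (hk ▸ antitone_vstarIdx_iterate z k.le_succ)
    rw [Function.iterate_succ_apply', vstar_eq_eraseIdx, hk',
      List.getElem?_eraseIdx_of_ge hj, ih hk' (by omega), Nat.add_right_comm, Nat.add_assoc]

lemma getLast_le_getLast_vstar {z : List α} (hz : z ≠ []) (h : vstar z ≠ []) :
    z.getLast hz ≤ (vstar z).getLast h := by
  obtain ⟨n, hn⟩ : ∃ n, z.length = n + 2 := ⟨z.length - 2, by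
    have := List.length_pos_iff.2 h; rw [length_vstar] at this; omega⟩
  have hget : (vstar z)[n]? = if n < vstarIdx z then z[n]? else z[n + 1]? := by
    rw [vstar_eq_eraseIdx, List.getElem?_eraseIdx]
  have hlen : n < (vstar z).length := by rw [length_vstar]; omega
  rw [List.getElem?_eq_getElem hlen] at hget
  simp only [List.getLast_eq_getElem, length_vstar, hn]
  split_ifs at hget with hlt
  · have hidx : vstarIdx z = n + 1 := by have := vstarIdx_lt_length hz; omega
    rw [List.getElem?_eq_getElem (by omega), Option.some_inj] at hget
    simpa [hget] using (getElem_vstarIdx_lt hidx (by omega)).le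
  · rw [List.getElem?_eq_getElem (by omega), Option.some_inj] at hget
    simp [hget]

lemma getLast_le_of_vstar_iterate_eq_singleton {z : List α} (hz : z ≠ []) {k : ℕ} {m : α}
    (h : vstar^[k] z = [m]) : z.getLast hz ≤ m := by
  induction k generalizing z with
  | zero => simp [show z = [m] from h]
  | succ k ih =>
    rw [Function.iterate_succ_apply] at h
    have hz' : vstar z ≠ [] := by rintro hnil; simp [hnil, vstar_iterate_eq_nil] at h
    exact (getLast_le_getLast_vstar hz hz').trans (ih hz' h)

lemma vstarIdx_append_lt_length {x y : List α} (hx : x ≠ []) (hy : y ≠ [])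
    (hyc : y.IsChain (· ≤ ·)) (hle : x.getLast hx ≤ y.head hy) :
    vstarIdx (x ++ y) < x.length := by
  have : vstarIdx (x ++ y) ≤ x.length - 1 := by
    rw [vstarIdx_le_iff, List.drop_append_of_le_length (by omega), List.drop_length_sub_one hx]
    exact (List.isChain_singleton _).append hyc (by simp [List.head?_eq_some_head hy, hle])
  have := List.length_pos_iff.2 hx
  omega

def LastMismatchLt (x y : List α) : Prop :=
  ∃ j : ℕ, j < x.length ∧ (∀ j' : ℕ, j < j' → x[j']? = y[j']?) ∧
    ∃ a b : α, x[j]? = some a ∧ y[j]? = some b ∧ a < b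

lemma LastMismatchLt.ne {x y : List α} (h : LastMismatchLt x y) : x ≠ y := by
  rintro rfl
  obtain ⟨j, -, -, a, b, ha, hb, hab⟩ := h
  exact hab.ne (Option.some_inj.1 (ha.symm.trans hb))

lemma LastMismatchLt.ne_nil {x y : List α} (h : LastMismatchLt x y) : x ≠ [] := by
  rintro rfl
  obtain ⟨j, hj, -⟩ := h
  exact Nat.not_lt_zero _ hj

lemma getElem?_eq_of_eraseIdx_eq {β : Type*} {x y : List β} {i n : ℕ} (hin : i ≤ n)
    (h : x.eraseIdx n = y.eraseIdx i) {j : ℕ} (hj : n < j) : x[j]? = y[j]? := by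
  obtain ⟨j, rfl⟩ := Nat.exists_eq_add_of_lt hj
  rw [← List.getElem?_eraseIdx_of_ge (l := x) (i := n) (j := n + j) (by omega), h,
    List.getElem?_eraseIdx_of_ge (by omega)]

lemma lastMismatchLt_of_eraseIdx_eq {x y : List α} {i n : ℕ} (hin : i ≤ n)
    (h : x.eraseIdx n = y.eraseIdx i) (hx : n < x.length) (hy : n < y.length)
    (hlt : x[n] < y[n]) : LastMismatchLt x y :=
  ⟨n, hx, fun _ => getElem?_eq_of_eraseIdx_eq hin h, x[n], y[n], by simp, by simp, hlt⟩

lemma eq_or_lastMismatchLt_of_eraseIdx_eq {x y : List α} {n : ℕ}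
    (h : x.eraseIdx n = y.eraseIdx n) (hx : n < x.length) (hy : n < y.length)
    (hle : x[n] ≤ y[n]) : x = y ∨ LastMismatchLt x y := by
  refine hle.eq_or_lt.imp (fun heq => List.ext_getElem? fun j => ?_)
    (lastMismatchLt_of_eraseIdx_eq le_rfl h hx hy)
  rcases lt_trichotomy j n with hj | rfl | hj
  · rw [← List.getElem?_eraseIdx_of_lt hj, h, List.getElem?_eraseIdx_of_lt hj]
  · rw [List.getElem?_eq_getElem hx, List.getElem?_eq_getElem hy, heq]
  · exact getElem?_eq_of_eraseIdx_eq le_rfl h hj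

lemma lastMismatchLt_of_eraseIdx_eq_of_lt {x y : List α} {i : ℕ} (hi : i < vstarIdx x)
    (h : x.eraseIdx (vstarIdx x) = y.eraseIdx i) (hlen : y.length = x.length) :
    LastMismatchLt x y := by
  obtain ⟨n, hn⟩ := Nat.exists_eq_add_of_lt hi
  have hx : vstarIdx x < x.length := vstarIdx_lt_length (by rintro rfl; simp [vstarIdx] at hi)
  refine lastMismatchLt_of_eraseIdx_eq hi.le h hx (hlen ▸ hx) ?_
  have hy : y[i + n + 1]'(by omega) = x[i + n] := by
    apply Option.some_inj.1
    rw [← List.getElem?_eq_getElem, ← List.getElem?_eq_getElem,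
      ← List.getElem?_eraseIdx_of_ge (l := y) (i := i) (j := i + n) (by omega), ← h, hn,
      List.getElem?_eraseIdx_of_lt (by omega)]
  simp only [hn, hy]
  exact getElem_vstarIdx_lt hn (hn ▸ hx)

def VLessOffPath (x y : List α) : Prop :=
  (¬ ∃ k : ℕ, vstar^[k] y = x) ∧ (¬ ∃ k : ℕ, vstar^[k] x = y) ∧
    ∃ s t : ℕ,
      vstar^[s + 1] x = vstar^[t + 1] y ∧
      (∀ s' t' : ℕ, vstar^[s' + 1] x = vstar^[t' + 1] y → s ≤ s' ∧ t ≤ t') ∧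
      LastMismatchLt (vstar^[s] x) (vstar^[t] y)

lemma vLessOffPath_of_lastMismatchLt {x y : List α} {t : ℕ} (ht : x.length + t = y.length)
    (hstar : vstar (vstar^[t] y) = vstar x) (h : LastMismatchLt x (vstar^[t] y)) :
    VLessOffPath x y := by
  have hx := List.length_pos_iff.2 h.ne_nil
  refine ⟨fun ⟨k, hk⟩ => ?_, fun ⟨k, hk⟩ => ?_, 0, t, ?_, fun s' t' hst => ?_, h⟩
  · have := congrArg List.length hk
    rw [length_vstar_iterate] at this
    exact h.ne (by rw [← hk, show k = t by omega])
  · have := congrArg List.length hk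
    rw [length_vstar_iterate] at this
    obtain rfl : k = 0 := by omega
    obtain rfl : t = 0 := by omega
    exact h.ne hk
  · rw [Function.iterate_one, ← hstar, Function.iterate_succ_apply']
  · have := congrArg List.length hst
    rw [length_vstar_iterate, length_vstar_iterate] at this
    omega

lemma VLessOffPath.of_vstar_right {x y : List α} (h : VLessOffPath x (vstar y))
    (hlt : x.length < y.length) : VLessOffPath x y := by
  obtain ⟨hxy, -, s, t, hst, hmin, hlast⟩ := h
  simp only [← Function.iterate_succ_apply] at hxy hst hmin hlast
  refine ⟨fun ⟨k, hk⟩ => ?_, fun ⟨k, hk⟩ => ?_, s, t + 1, hst,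
    fun s' t' hst' => ?_, hlast⟩
  · rcases k with _ | k
    · exact hlt.ne (congrArg List.length hk).symm
    · exact hxy ⟨k, hk⟩
  · have := congrArg List.length hk
    rw [length_vstar_iterate] at this
    omega
  · rcases t' with _ | t'
    · have := congrArg List.length hst'
      rw [length_vstar_iterate, length_vstar_iterate] at this
      have := List.length_pos_iff.2 hlast.ne_nil
      rw [length_vstar_iterate] at this
      omega
    · have := hmin s' t' hst'
      omega

lemma VLessOffPath.of_vstar {x y : List α} (h : VLessOffPath (vstar x) (vstar y))
    (hlt : x.length < y.length) : VLessOffPath x y := by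
  obtain ⟨hxy, -, s, t, hst, hmin, hlast⟩ := h
  have hx := List.length_pos_iff.2 hlast.ne_nil
  rw [length_vstar_iterate, length_vstar] at hx
  refine ⟨fun ⟨k, hk⟩ => ?_, fun ⟨k, hk⟩ => ?_, s + 1, t + 1,
    by simpa only [Function.iterate_succ_apply] using hst, fun s' t' hst' => ?_,
    by simpa only [Function.iterate_succ_apply] using hlast⟩
  · rcases k with _ | k
    · exact hlt.ne (congrArg List.length hk).symm
    · refine hxy ⟨k + 1, ?_⟩
      rw [← hk, ← Function.iterate_succ_apply, Function.iterate_succ_apply']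
  · have := congrArg List.length hk
    rw [length_vstar_iterate] at this
    omega
  · rcases s' with _ | s'
    · refine absurd ⟨t', ?_⟩ hxy
      simpa only [Function.iterate_succ_apply, Function.iterate_zero_apply] using hst'.symm
    rcases t' with _ | t'
    · have := congrArg List.length hst'
      rw [length_vstar_iterate, length_vstar_iterate] at this
      omega
    · have := hmin s' t' (by simpa only [Function.iterate_succ_apply] using hst')
      omega

lemma vstar_iterate_append_eq_or_vLessOffPath_of_lt {u v : List α}
    (hlt : vstarIdx (u ++ v) < u.length) (hpath : vstar^[v.length + 1] (u ++ v) = vstar u) :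
    vstar^[v.length] (u ++ v) = u ∨ VLessOffPath u (u ++ v) := by
  set b := vstar^[v.length] (u ++ v)
  have hidx : vstarIdx u = vstarIdx (u ++ v) := (vstarIdx_append_of_lt hlt).symm
  have hstar : vstar b = vstar u := by rw [← hpath, Function.iterate_succ_apply']
  have hblen : b.length = u.length := by simp [b, length_vstar_iterate]
  suffices u = b ∨ LastMismatchLt u b from
    this.imp Eq.symm (vLessOffPath_of_lastMismatchLt (by simp) hstar)
  have herase : u.eraseIdx (vstarIdx u) = b.eraseIdx (vstarIdx b) := by
    rw [← vstar_eq_eraseIdx, ← vstar_eq_eraseIdx, hstar]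
  have hbu : vstarIdx b ≤ vstarIdx u :=
    hidx ▸ antitone_vstarIdx_iterate (u ++ v) v.length.zero_le
  rcases hbu.lt_or_eq with hbu | hbu
  · exact .inr (lastMismatchLt_of_eraseIdx_eq_of_lt hbu herase hblen)
  rw [hbu] at herase
  rw [hidx] at herase hbu
  -- all `|v|` deletions on the way from `u ++ v` to `b` happened at the same position
  have hbget : b[vstarIdx (u ++ v)]? = (u ++ v)[vstarIdx (u ++ v) + v.length]? :=
    getElem?_vstar_iterate_of_vstarIdx_eq hbu le_rfl
  have hchain := (isChain_drop_vstarIdx (u ++ v)).sortedLE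
  refine eq_or_lastMismatchLt_of_eraseIdx_eq herase hlt (hblen ▸ hlt) ?_
  have hle := hchain.getElem_le_getElem_of_le (i := 0) (j := v.length)
    (hi := by rw [List.length_drop, List.length_append]; omega)
    (hj := by rw [List.length_drop, List.length_append]; omega) (Nat.zero_le _)
  simp only [List.getElem_drop, Nat.add_zero] at hle
  rw [List.getElem?_eq_getElem (by omega),
    List.getElem?_eq_getElem (by rw [List.length_append]; omega), Option.some_inj] at hbget
  simpa [hbget, List.getElem_append_left hlt] using hle

theorem vstar_iterate_append_eq_or_vLessOffPath (u v : List α) :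
    vstar^[v.length] (u ++ v) = u ∨ VLessOffPath u (u ++ v) := by
  induction hn : u.length + v.length using Nat.strong_induction_on generalizing u v with
  | _ n ih =>
  rcases eq_or_ne v [] with rfl | hv
  · simp
  have hv' := List.length_pos_iff.2 hv
  rcases lt_or_ge (vstarIdx (u ++ v)) u.length with hlt | hge
  · have hstar := vstar_append_of_lt hlt
    have hu : u ≠ [] := by rintro rfl; simp at hlt
    have hu' := List.length_pos_iff.2 hu
    rcases ih _ (by rw [length_vstar]; omega) (vstar u) v rfl with hpath | hoff
    · refine vstar_iterate_append_eq_or_vLessOffPath_of_lt hlt ?_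
      rw [Function.iterate_succ_apply, hstar, hpath]
    · exact .inr ((hstar ▸ hoff).of_vstar (by rw [List.length_append]; omega))
  · have hstar := vstar_append_of_length_le hge
    rcases ih _ (by rw [length_vstar]; omega) u (vstar v) rfl with hpath | hoff
    · left
      rw [show v.length = (vstar v).length + 1 by rw [length_vstar]; omega,
        Function.iterate_succ_apply, hstar, hpath]
    · exact .inr ((hstar ▸ hoff).of_vstar_right (by rw [List.length_append]; omega))

lemma vLessOffPath_prepend_of_length_le {u v : List α} (hv : v ≠ [])
    (hge : v.length ≤ vstarIdx (v ++ u))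
    (hpath : ∀ k ≤ v.length, vstar^[k] (v ++ vstar u) = vstar^[k] v ++ vstar u) :
    VLessOffPath u (v ++ u) := by
  have hstar := vstar_append_of_length_le hge
  have hu : u ≠ [] := by
    rintro rfl
    exact (vstarIdx_lt_length hv).not_ge (by simpa using hge)
  obtain ⟨L, hL⟩ : ∃ L, v.length = L + 1 := ⟨v.length - 1, by
    have := List.length_pos_iff.2 hv; omega⟩
  obtain ⟨m, hm⟩ : ∃ m, vstar^[L] v = [m] :=
    List.length_eq_one_iff.1 (by rw [length_vstar_iterate]; omega)
  have hb : vstar^[v.length] (v ++ u) = m :: vstar u := by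
    rw [hL, Function.iterate_succ_apply, hstar, hpath L (by omega), hm, List.singleton_append]
  have hbstar : vstar (vstar^[v.length] (v ++ u)) = vstar u := by
    rw [← Function.iterate_succ_apply' vstar, Function.iterate_succ_apply, hstar, hpath _ le_rfl,
      vstar_iterate_eq_nil le_rfl, List.nil_append]
  refine vLessOffPath_of_lastMismatchLt (by simp [add_comm]) hbstar ?_
  rw [hb]
  have herase : u.eraseIdx (vstarIdx u) = (m :: vstar u).eraseIdx 0 := (vstar_eq_eraseIdx u).symm
  rcases (vstarIdx u).eq_zero_or_pos with h0 | hpos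
  · have huc : u.IsChain (· ≤ ·) := by simpa using vstarIdx_le_iff.1 h0.le
    have hhead : u.head hu < v.getLast hv :=
      lt_of_not_ge fun hle => (vstarIdx_append_lt_length hv hu huc hle).not_ge hge
    have hgm : v.getLast hv ≤ m := getLast_le_of_vstar_iterate_eq_singleton hv hm
    refine lastMismatchLt_of_eraseIdx_eq le_rfl (h0 ▸ herase) (List.length_pos_iff.2 hu)
      (by simp) ?_
    simpa [List.head_eq_getElem] using hhead.trans_le hgm
  · refine lastMismatchLt_of_eraseIdx_eq_of_lt hpos herase ?_
    have := List.length_pos_iff.2 hu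
    rw [List.length_cons, length_vstar]
    omega

theorem vstar_iterate_prepend_eq_or_vLessOffPath (u v : List α) :
    (∀ k ≤ v.length, vstar^[k] (v ++ u) = vstar^[k] v ++ u) ∨ VLessOffPath u (v ++ u) := by
  induction hn : u.length + v.length using Nat.strong_induction_on generalizing u v with
  | _ n ih =>
  rcases eq_or_ne u [] with rfl | hu
  · simp
  rcases eq_or_ne v [] with rfl | hv
  · simp
  have hu' := List.length_pos_iff.2 hu
  have hv' := List.length_pos_iff.2 hv
  rcases lt_or_ge (vstarIdx (v ++ u)) v.length with hlt | hge
  · have hstar := vstar_append_of_lt hlt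
    rcases ih _ (by rw [length_vstar]; omega) u (vstar v) rfl with hpath | hoff
    · left
      rintro (_ | k) hk
      · rfl
      · rw [Function.iterate_succ_apply, hstar, hpath k (by rw [length_vstar]; omega),
          Function.iterate_succ_apply]
    · exact .inr ((hstar ▸ hoff).of_vstar_right (by rw [List.length_append]; omega))
  · have hstar := vstar_append_of_length_le hge
    rcases ih _ (by rw [length_vstar]; omega) (vstar u) v rfl with hpath | hoff
    · exact .inr (vLessOffPath_prepend_of_length_le hv hge hpath)
    · exact .inr ((hstar ▸ hoff).of_vstar (by rw [List.length_append]; omega))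

theorem vless_prefix_and_suffix_general {α : Type*} [LinearOrder α]
    (u v : List α) (hv : v ≠ []) :
    VLess u (u ++ v) ∧ VLess u (v ++ u) := by
  have hk : 0 < v.length := List.length_pos_iff.2 hv
  constructor
  · rcases vstar_iterate_append_eq_or_vLessOffPath u v with h | h
    · exact .inl ⟨v.length, hk, h⟩
    · exact .inr h
  · rcases vstar_iterate_prepend_eq_or_vLessOffPath u v with h | h
    · exact .inl ⟨v.length, hk, by simpa [vstar_iterate_eq_nil] using h v.length le_rfl⟩
    · exact .inr h

/-- Every nonempty proper prefix and every nonempty proper suffix of a string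
precedes that string in V-order: for nonempty `u`, `v`, both `u ≺ uv`
and `u ≺ vu`. -/
theorem vless_prefix_and_suffix {α : Type*} [LinearOrder α]
    (u v : List α) (hu : u ≠ []) (hv : v ≠ []) :
    VLess u (u ++ v) ∧ VLess u (v ++ u) :=
  vless_prefix_and_suffix_general u v hv
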